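/- There exists a constant c > 0 such that for every finite Sidon set A of positive integers, |Σ*A| ≥ c·|A|³. -/

import Mathlib

/-- The restricted sumset `Σ* A` of a finite set of integers. -/
def restrictedSumset (A : Finset ℤ) : Finset ℤ :=
  A.powerset.image (fun B => B.sum id)

/-- `A` is a Sidon set. -/
def IsSidonSet (A : Finset ℤ) : Prop :=
  ∀ a ∈ A, ∀ b ∈ A, ∀ c ∈ A, ∀ d ∈ A, a + b = c + d → (a = c ∧ b = d) ∨ (a = d ∧ b = c)

/-!
Split `A` into its lower half `L` and upper half `U`. Since `L` is Sidon, its `C(|L|, 2)` pair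
sums are distinct, and each is smaller than the sum of any two elements of `U`. Hence, if `U'` is
`U` with two elements removed, the translate `Σ U + pairSums L` lies strictly above
`Σ* U' + pairSums L`. Removing elements of `U` two at a time thus yields `|U| / 2 + 1` disjoint
translates of the pair sums inside `Σ* U + pairSums L ⊆ Σ* A`, about `n³ / 32` elements.
-/

open Finset
open scoped Pointwise

lemma mem_restrictedSumset {A : Finset ℤ} {x : ℤ} :
    x ∈ restrictedSumset A ↔ ∃ B ⊆ A, B.sum id = x := by
  simp [restrictedSumset]

lemma zero_mem_restrictedSumset (A : Finset ℤ) : 0 ∈ restrictedSumset A :=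
  mem_restrictedSumset.2 ⟨∅, empty_subset _, sum_empty⟩

lemma restrictedSumset_mono {A A' : Finset ℤ} (h : A ⊆ A') :
    restrictedSumset A ⊆ restrictedSumset A' :=
  image_subset_image (powerset_mono.2 h)

lemma restrictedSumset_add_subset {A A' : Finset ℤ} (h : Disjoint A A') :
    restrictedSumset A + restrictedSumset A' ⊆ restrictedSumset (A ∪ A') := by
  intro x hx
  obtain ⟨_, hs, _, hs', rfl⟩ := mem_add.1 hx
  obtain ⟨B, hB, rfl⟩ := mem_restrictedSumset.1 hs
  obtain ⟨B', hB', rfl⟩ := mem_restrictedSumset.1 hs'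
  exact mem_restrictedSumset.2 ⟨B ∪ B', union_subset_union hB hB',
    sum_union (h.mono hB hB')⟩

def pairSums (A : Finset ℤ) : Finset ℤ :=
  (A.powersetCard 2).image (fun P => P.sum id)

lemma pairSums_subset_restrictedSumset (A : Finset ℤ) : pairSums A ⊆ restrictedSumset A :=
  image_subset_image fun _ hP => mem_powerset.2 (mem_powersetCard.1 hP).1

lemma mem_pairSums {A : Finset ℤ} {x : ℤ} :
    x ∈ pairSums A ↔ ∃ a ∈ A, ∃ b ∈ A, a ≠ b ∧ a + b = x := by
  simp only [pairSums, mem_image, mem_powersetCard, card_eq_two]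
  constructor
  · rintro ⟨_, ⟨hP, a, b, hab, rfl⟩, rfl⟩
    exact ⟨a, hP (by simp), b, hP (by simp), hab, (sum_pair (f := id) hab).symm⟩
  · rintro ⟨a, ha, b, hb, hab, rfl⟩
    exact ⟨{a, b}, ⟨by simp [insert_subset_iff, ha, hb], a, b, hab, rfl⟩, sum_pair hab⟩

lemma IsSidonSet.subset {A A' : Finset ℤ} (h : IsSidonSet A') (hA : A ⊆ A') : IsSidonSet A :=
  fun a ha b hb c hc d hd => h a (hA ha) b (hA hb) c (hA hc) d (hA hd)

lemma IsSidonSet.card_pairSums {A : Finset ℤ} (h : IsSidonSet A) :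
    #(pairSums A) = (#A).choose 2 := by
  rw [pairSums, card_image_of_injOn, card_powersetCard]
  intro P hP Q hQ hPQ
  obtain ⟨hPA, a, b, hab, rfl⟩ := (mem_powersetCard.1 hP).imp_right card_eq_two.1
  obtain ⟨hQA, c, d, hcd, rfl⟩ := (mem_powersetCard.1 hQ).imp_right card_eq_two.1
  simp only [sum_pair hab, sum_pair hcd] at hPQ
  rcases h a (hPA (by simp)) b (hPA (by simp)) c (hQA (by simp)) d (hQA (by simp)) hPQ with
    ⟨rfl, rfl⟩ | ⟨rfl, rfl⟩
  · rfl
  · exact pair_comm a b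

lemma card_mul_le_card_restrictedSumset_add {U B : Finset ℤ} (hU : ∀ u ∈ U, 0 ≤ u)
    (hB : ∀ b ∈ B, 0 ≤ b) (hBU : ∀ b ∈ B, ∀ u ∈ U, ∀ v ∈ U, u ≠ v → b < u + v) :
    (#U / 2 + 1) * #B ≤ #(restrictedSumset U + B) := by
  induction U using Finset.strongInduction with
  | H U ih =>
  by_cases hU2 : #U < 2
  · rw [Nat.div_eq_of_lt hU2, zero_add, one_mul]
    exact card_le_card_add_left ⟨0, zero_mem_restrictedSumset U⟩
  obtain ⟨u, hu, v, hv, huv⟩ := one_lt_card.1 (not_lt.1 hU2)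
  set U' := U \ {u, v}
  have hpair : {u, v} ⊆ U := insert_subset hu (singleton_subset_iff.2 hv)
  have hcard : #U' = #U - 2 := by rw [card_sdiff_of_subset hpair, card_pair huv]
  have hsum : U.sum id = U'.sum id + (u + v) := by
    rw [← sum_sdiff hpair, sum_pair huv, id, id]
  have hU' : U' ⊂ U := sdiff_ssubset hpair (insert_nonempty u {v})
  have ih' := ih U' hU' (fun w hw => hU w (hU'.subset hw))
    (fun b hb w hw w' hw' => hBU b hb w (hU'.subset hw) w' (hU'.subset hw'))
  have hlt : ∀ x ∈ restrictedSumset U' + B, ∀ y ∈ U.sum id +ᵥ B, x < y := by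
    intro x hx y hy
    obtain ⟨_, hs, b, hb, rfl⟩ := mem_add.1 hx
    obtain ⟨T, hT, rfl⟩ := mem_restrictedSumset.1 hs
    obtain ⟨b', hb', rfl⟩ := mem_vadd_finset.1 hy
    have : T.sum id ≤ U'.sum id :=
      sum_le_sum_of_subset_of_nonneg hT fun w hw _ => hU w (hU'.subset hw)
    have := hBU b hb u hu v hv huv
    have := hB b' hb'
    simp only [vadd_eq_add, hsum]
    omega
  have hsub : restrictedSumset U' + B ∪ (U.sum id +ᵥ B) ⊆ restrictedSumset U + B := by
    refine union_subset (add_subset_add_right (restrictedSumset_mono hU'.subset)) ?_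
    rw [← singleton_add]
    exact add_subset_add_right <|
      singleton_subset_iff.2 (mem_restrictedSumset.2 ⟨U, Subset.rfl, rfl⟩)
  calc (#U / 2 + 1) * #B = (#U' / 2 + 1) * #B + #B := by
        rw [hcard, ← add_one_mul]; congr 2; omega
    _ ≤ #(restrictedSumset U' + B) + #(U.sum id +ᵥ B) := by
        rw [card_vadd_finset]; exact Nat.add_le_add_right ih' _
    _ = #(restrictedSumset U' + B ∪ (U.sum id +ᵥ B)) :=
        (card_union_of_disjoint (disjoint_left.2 fun x hx hx' => (hlt x hx x hx').false)).symm
    _ ≤ #(restrictedSumset U + B) := card_le_card hsub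

lemma exists_subset_card_eq_forall_lt {α : Type*} [LinearOrder α] (A : Finset α) {m : ℕ}
    (hm : m ≤ #A) : ∃ L ⊆ A, #L = m ∧ ∀ x ∈ L, ∀ y ∈ A \ L, x < y := by
  induction m with
  | zero => exact ⟨∅, empty_subset A, card_empty, by simp⟩
  | succ m ih =>
    obtain ⟨L, hLA, hL, hlt⟩ := ih (by omega)
    have hne : (A \ L).Nonempty := by
      rw [← card_pos, card_sdiff_of_subset hLA]; omega
    set y := (A \ L).min' hne
    have hy : y ∈ A \ L := min'_mem _ hne
    refine ⟨insert y L, insert_subset (mem_sdiff.1 hy).1 hLA,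
      by rw [card_insert_of_notMem (mem_sdiff.1 hy).2, hL], ?_⟩
    intro x hx z hz
    have hz' : z ∈ A \ L := by
      simp only [mem_sdiff, mem_insert, not_or] at hz ⊢; exact ⟨hz.1, hz.2.2⟩
    rcases mem_insert.1 hx with rfl | hx
    · refine lt_of_le_of_ne (min'_le _ _ hz') fun h => ?_
      simp [← h] at hz
    · exact hlt x hx z hz'

lemma cube_le_of_half_mul_choose_two_le {n s : ℕ} (hs : 1 ≤ s)
    (h : ((n - n / 2) / 2 + 1) * (n / 2).choose 2 ≤ s) : n ^ 3 ≤ 128 * s := by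
  by_cases hn : n ≤ 3
  · have : n ^ 3 ≤ 3 ^ 3 := Nat.pow_le_pow_left hn 3
    omega
  obtain ⟨k, hk⟩ : ∃ k, n / 2 = k + 2 := ⟨n / 2 - 2, by omega⟩
  have hx : k + 3 ≤ 2 * ((n - n / 2) / 2 + 1) := by omega
  have hy : 2 * (k + 2).choose 2 = (k + 2) * (k + 1) := by
    rw [Nat.choose_two_right, Nat.mul_div_cancel' (Nat.even_mul_pred_self _).two_dvd]
    rfl
  rw [hk] at h hx
  have hn' : n ≤ 2 * k + 5 := by omega
  calc n ^ 3 ≤ (2 * k + 5) ^ 3 := Nat.pow_le_pow_left hn' 3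
    _ ≤ 32 * (k + 3) * ((k + 2) * (k + 1)) := by ring_nf; omega
    _ ≤ 32 * (2 * ((n - (k + 2)) / 2 + 1)) * (2 * (k + 2).choose 2) := by rw [hy]; gcongr
    _ ≤ 128 * s := by nlinarith

lemma IsSidonSet.half_mul_choose_two_le_card_restrictedSumset {A : Finset ℤ}
    (hpos : ∀ a ∈ A, 0 < a) (hA : IsSidonSet A) :
    ((#A - #A / 2) / 2 + 1) * (#A / 2).choose 2 ≤ #(restrictedSumset A) := by
  obtain ⟨L, hLA, hL, hLU⟩ := exists_subset_card_eq_forall_lt A (Nat.div_le_self (#A) 2)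
  set U := A \ L
  have hU : #U = #A - #A / 2 := by rw [card_sdiff_of_subset hLA, hL]
  have hpairs : #(pairSums L) = (#A / 2).choose 2 := by rw [(hA.subset hLA).card_pairSums, hL]
  have hsub : restrictedSumset U + pairSums L ⊆ restrictedSumset A := by
    calc restrictedSumset U + pairSums L ⊆ restrictedSumset U + restrictedSumset L :=
          add_subset_add_left (pairSums_subset_restrictedSumset L)
      _ ⊆ restrictedSumset (U ∪ L) := restrictedSumset_add_subset sdiff_disjoint
      _ = restrictedSumset A := by rw [sdiff_union_of_subset hLA]
  rw [← hU, ← hpairs]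
  refine (card_mul_le_card_restrictedSumset_add (fun u hu => ?_) (fun b hb => ?_) ?_).trans
    (card_le_card hsub)
  · exact (hpos u (mem_sdiff.1 hu).1).le
  · obtain ⟨a, ha, a', ha', -, rfl⟩ := mem_pairSums.1 hb
    exact (add_pos (hpos a (hLA ha)) (hpos a' (hLA ha'))).le
  · intro b hb u hu v hv _
    obtain ⟨a, ha, a', ha', -, rfl⟩ := mem_pairSums.1 hb
    exact add_lt_add (hLU a ha u hu) (hLU a' ha' v hv)

/-- There is a constant `c > 0` such that every finite Sidon set of positive integers
satisfies `|Σ*A| ≥ c |A|³`. -/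
theorem sidon_restrictedSumset_cubic :
    ∃ c : ℝ, 0 < c ∧ ∀ A : Finset ℤ, (∀ a ∈ A, 0 < a) → IsSidonSet A →
      c * (A.card : ℝ) ^ 3 ≤ (restrictedSumset A).card := by
  refine ⟨1 / 128, by norm_num, fun A hpos hA => ?_⟩
  have hcube : #A ^ 3 ≤ 128 * #(restrictedSumset A) :=
    cube_le_of_half_mul_choose_two_le (card_pos.2 ⟨0, zero_mem_restrictedSumset A⟩)
      (hA.half_mul_choose_two_le_card_restrictedSumset hpos)
  have : (#A : ℝ) ^ 3 ≤ 128 * #(restrictedSumset A) := by exact_mod_cast hcube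
  linarith
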